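/- arXiv:2601.08452 — 2 statements merged into one kernel-verified Lean document; each statement's English description precedes it below -/
import Mathlib

section
/- The 16-point code C' ⊂ ℤ₆⁴ consisting of the points (0,0,0,0), (4,2,4,0), (3,3,3,3), (2,0,4,2), (2,4,2,0), (3,1,1,1), (1,1,3,5), (1,5,1,3), (0,2,2,2), (3,5,5,5), (1,3,5,1), (0,4,4,4), (4,0,2,4), (4,4,0,2), (5,1,5,3), (5,5,3,1) has minimum L₂-norm toroidal distance (modulus 6) equal to 2√3. -/
/-- Toroidal distance modulus `p`: least Euclidean norm of `v₁ - v₂ + k`,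
`k ∈ pℤ^ℓ`. -/
noncomputable def torusDist (p : ℕ) {ℓ : ℕ} (v₁ v₂ : Fin ℓ → ℤ) : ℝ :=
  sInf {r : ℝ | ∃ k : Fin ℓ → ℤ,
    r = Real.sqrt (∑ i, ((v₁ i - v₂ i + (p : ℤ) * k i : ℤ) : ℝ) ^ 2)}

/-- The 16-point GTD code in `ℤ₆⁴` from Example (ℓ = 4). -/
def gtdCode4 : Set (Fin 4 → ℤ) :=
  {![0,0,0,0], ![4,2,4,0], ![3,3,3,3], ![2,0,4,2],
   ![2,4,2,0], ![3,1,1,1], ![1,1,3,5], ![1,5,1,3],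
   ![0,2,2,2], ![3,5,5,5], ![1,3,5,1], ![0,4,4,4],
   ![4,0,2,4], ![4,4,0,2], ![5,1,5,3], ![5,5,3,1]}

/-! The minimum over `k ∈ ℤ` of `(d + p k)²` is attained at one of the two multiples of `p`
adjacent to `-d`, so the toroidal distance is computed coordinatewise from residues mod `p`,
which reduces the theorem to a finite check over the `16 · 15` ordered pairs of codewords. -/

def sqDistMod (p : ℕ) (d : ℤ) : ℤ := min ((d % p) ^ 2) ((p - d % p) ^ 2)

theorem sqDistMod_le_sq_add_mul (p : ℕ) (d k : ℤ) : sqDistMod p d ≤ (d + p * k) ^ 2 := by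
  rcases Nat.eq_zero_or_pos p with rfl | hp
  · simp [sqDistMod]
  have hr₀ : 0 ≤ d % p := Int.emod_nonneg d (by omega)
  have hr₁ : d % p < p := Int.emod_lt_of_pos d (by omega)
  obtain ⟨m, hm⟩ : ∃ m, d + p * k = d % p + p * m :=
    ⟨d / p + k, by linarith [Int.mul_ediv_add_emod d p]⟩
  rw [hm, sqDistMod]
  rcases lt_trichotomy m 0 with h | rfl | h
  · refine (min_le_right _ _).trans (sq_le_sq.mpr ?_)
    have : (p : ℤ) * m ≤ -p := by nlinarith
    rw [abs_of_pos (by omega), abs_of_neg (by omega)]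
    omega
  · simp
  · refine (min_le_right _ _).trans (sq_le_sq.mpr ?_)
    have : (p : ℤ) ≤ p * m := by nlinarith
    rw [abs_of_pos (by omega), abs_of_pos (by omega)]
    omega

theorem exists_sq_add_mul_eq_sqDistMod (p : ℕ) (d : ℤ) :
    ∃ k : ℤ, (d + p * k) ^ 2 = sqDistMod p d := by
  have hd := Int.mul_ediv_add_emod d p
  rcases le_total ((d % p) ^ 2) ((p - d % p) ^ 2) with h | h
  · refine ⟨-(d / p), ?_⟩
    rw [sqDistMod, min_eq_left h, show d + p * -(d / p) = d % p by linarith]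
  · refine ⟨-(d / p) - 1, ?_⟩
    rw [sqDistMod, min_eq_right h, show d + p * (-(d / p) - 1) = -(p - d % p) by linarith,
      neg_sq]

theorem torusDist_eq_sqrt_sum_sqDistMod (p : ℕ) {ℓ : ℕ} (v₁ v₂ : Fin ℓ → ℤ) :
    torusDist p v₁ v₂ = √(∑ i, (sqDistMod p (v₁ i - v₂ i) : ℝ)) := by
  refine IsLeast.csInf_eq ⟨?_, ?_⟩
  · choose k hk using fun i => exists_sq_add_mul_eq_sqDistMod p (v₁ i - v₂ i)
    refine ⟨k, ?_⟩
    congr 1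
    refine Finset.sum_congr rfl fun i _ => ?_
    exact_mod_cast (hk i).symm
  · rintro _ ⟨k, rfl⟩
    gcongr with i
    exact_mod_cast sqDistMod_le_sq_add_mul p (v₁ i - v₂ i) (k i)

def gtdCode4List : List (Fin 4 → ℤ) :=
  [![0,0,0,0], ![4,2,4,0], ![3,3,3,3], ![2,0,4,2],
   ![2,4,2,0], ![3,1,1,1], ![1,1,3,5], ![1,5,1,3],
   ![0,2,2,2], ![3,5,5,5], ![1,3,5,1], ![0,4,4,4],
   ![4,0,2,4], ![4,4,0,2], ![5,1,5,3], ![5,5,3,1]]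

theorem mem_gtdCode4List {v : Fin 4 → ℤ} (h : v ∈ gtdCode4) : v ∈ gtdCode4List := by
  simp only [gtdCode4, Set.mem_insert_iff, Set.mem_singleton_iff] at h
  simp only [gtdCode4List, List.mem_cons, List.not_mem_nil, or_false]
  tauto

theorem twelve_le_sum_sqDistMod_of_mem_gtdCode4 {v₁ v₂ : Fin 4 → ℤ}
    (h₁ : v₁ ∈ gtdCode4) (h₂ : v₂ ∈ gtdCode4) (hne : v₁ ≠ v₂) :
    12 ≤ ∑ i, sqDistMod 6 (v₁ i - v₂ i) := by
  have hcheck : ∀ v₁ ∈ gtdCode4List, ∀ v₂ ∈ gtdCode4List, v₁ ≠ v₂ →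
      12 ≤ ∑ i, sqDistMod 6 (v₁ i - v₂ i) := by
    decide
  exact hcheck v₁ (mem_gtdCode4List h₁) v₂ (mem_gtdCode4List h₂) hne

theorem sqrt_twelve : √12 = 2 * √3 := by
  rw [show (12 : ℝ) = 2 ^ 2 * 3 by norm_num, Real.sqrt_mul (by positivity),
    Real.sqrt_sq (by norm_num)]

/-- the 16-point code `C' ⊆ ℤ₆⁴` has minimum `L₂`-norm toroidal
distance (modulus 6) equal to `2√3`. -/
theorem stmt17 :
    IsLeast
      {r : ℝ | ∃ v₁ ∈ gtdCode4, ∃ v₂ ∈ gtdCode4, v₁ ≠ v₂ ∧ r = torusDist 6 v₁ v₂}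
      (2 * Real.sqrt 3) := by
  constructor
  · refine ⟨![0,0,0,0], by simp [gtdCode4], ![2,4,2,0], by simp [gtdCode4], by decide, ?_⟩
    rw [torusDist_eq_sqrt_sum_sqDistMod, ← sqrt_twelve]
    congr 1
    exact_mod_cast (show ∑ i, sqDistMod 6 (![0,0,0,0] i - ![2,4,2,0] i) = 12 by decide).symm
  · rintro _ ⟨v₁, h₁, v₂, h₂, hne, rfl⟩
    rw [torusDist_eq_sqrt_sum_sqDistMod, ← sqrt_twelve]
    gcongr
    exact_mod_cast twelve_le_sum_sqDistMod_of_mem_gtdCode4 h₁ h₂ hne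
end

section
/- Let 2E₈ denote the E₈ lattice scaled by 2, which has determinant 2⁸ and minimum Euclidean distance 2√2, and which contains the sublattice 4ℤ⁸. Then the code C' = 2E₈ ∩ {0,1,2,3}⁸ ⊂ ℤ₄⁸ has exactly 2⁸ = 256 points and minimum L₂-norm toroidal distance (modulus 4) equal to 2√2; consequently, the scaled code ⌊q/4⌋·C' ⊂ ℤ_q⁸ has minimum toroidal distance modulus q equal to 2√2·⌊q/4⌋. -/
/-- The lattice `2E₈ ⊆ ℤ⁸`: vectors whose coordinates are all even or all odd,
with coordinate sum divisible by `4` (the `E₈` lattice scaled by `2`). -/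
def twoE8 : AddSubgroup (Fin 8 → ℤ) where
  carrier := {x | ((∀ i, Even (x i)) ∨ (∀ i, Odd (x i))) ∧ (4 : ℤ) ∣ ∑ i, x i}
  zero_mem' := by
    refine ⟨Or.inl fun i => ?_, by simp⟩
    simp
  add_mem' := by
    rintro a b ⟨hpa, hda⟩ ⟨hpb, hdb⟩
    refine ⟨?_, by simpa [Finset.sum_add_distrib] using dvd_add hda hdb⟩
    rcases hpa with hpa | hpa <;> rcases hpb with hpb | hpb
    · exact Or.inl fun i => (hpa i).add (hpb i)
    · exact Or.inr fun i => (hpa i).add_odd (hpb i)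
    · exact Or.inr fun i => (hpa i).add_even (hpb i)
    · exact Or.inl fun i => (hpa i).add_odd (hpb i)
  neg_mem' := by
    rintro a ⟨hpa, hda⟩
    refine ⟨?_, by simpa [Finset.sum_neg_distrib] using hda.neg_right⟩
    rcases hpa with hpa | hpa
    · exact Or.inl fun i => (hpa i).neg
    · exact Or.inr fun i => (hpa i).neg

/-- Euclidean distance between integer vectors. -/
noncomputable def eucDist {ℓ : ℕ} (v₁ v₂ : Fin ℓ → ℤ) : ℝ :=
  Real.sqrt (∑ i, ((v₁ i - v₂ i : ℤ) : ℝ) ^ 2)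

/-!
Reduction mod `n` identifies the lattice points in the box `[0, n)^ℓ` with the image of the
lattice in `(ℤ/n)^ℓ`, so there are `n^ℓ / [ℤ^ℓ : Λ]` of them whenever `nℤ^ℓ ⊆ Λ`. The index of
`2E₈` is `2⁸` because `2E₈` is the kernel of the surjection
`x ↦ (∑ xᵢ mod 4, (xᵢ - x₀ mod 2)_{1 ≤ i ≤ 6})` onto `ℤ/4 × (ℤ/2)⁶`.

For the toroidal distance: if `|d| < 4` and `4c ≤ q`, then `|c d + q k| ≥ c |d + 4k|`. So a
representative `c d + q k` of a difference `c (v₁ - v₂)` of scaled codewords is at least `c` times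
as long as `d + 4k`, which is a nonzero vector of `2E₈` and hence has norm at least `2√2`.
-/

open Finset

lemma intCast_eq_intCast_of_mem_Ico {n : ℕ} {a b : ℤ} (ha : a ∈ Set.Ico (0 : ℤ) n)
    (hb : b ∈ Set.Ico (0 : ℤ) n) (h : (a : ZMod n) = b) : a = b := by
  rwa [ZMod.intCast_eq_intCast_iff', Int.emod_eq_of_lt ha.1 ha.2,
    Int.emod_eq_of_lt hb.1 hb.2] at h

section BoxCount

variable {ι : Type*} [Fintype ι] {n : ℕ} [NeZero n]

noncomputable def boxEquivMapIntCast (L : AddSubgroup (ι → ℤ)) (hL : ∀ v, (n : ℤ) • v ∈ L) :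
    {v // v ∈ L ∧ ∀ i, v i ∈ Set.Ico (0 : ℤ) n} ≃
      L.map (AddMonoidHom.compLeft (Int.castAddHom (ZMod n)) ι) :=
  Equiv.ofBijective (fun v => ⟨_, AddSubgroup.mem_map_of_mem _ v.2.1⟩) <| by
    refine ⟨fun v w h => Subtype.ext <| funext fun i => ?_, ?_⟩
    · exact intCast_eq_intCast_of_mem_Ico (v.2.2 i) (w.2.2 i) (congrFun (congrArg Subtype.val h) i)
    · rintro ⟨_, v, hv, rfl⟩
      have hn : (0 : ℤ) < n := by exact_mod_cast Nat.pos_of_neZero n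
      refine ⟨⟨fun i => v i % n, ?_,
        fun i => ⟨Int.emod_nonneg _ hn.ne', Int.emod_lt_of_pos _ hn⟩⟩, ?_⟩
      · have : (fun i => v i % n) = v - (n : ℤ) • fun i => v i / n := by
          ext i; simp [Int.emod_def]
        rw [this]
        exact sub_mem hv (hL _)
      · ext i
        simp

theorem card_box_mul_index (L : AddSubgroup (ι → ℤ)) (hL : ∀ v, (n : ℤ) • v ∈ L) :
    Nat.card {v // v ∈ L ∧ ∀ i, v i ∈ Set.Ico (0 : ℤ) n} * L.index = n ^ Fintype.card ι := by
  set red := AddMonoidHom.compLeft (Int.castAddHom (ZMod n)) ι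
  have hker : red.ker ≤ L := fun v hv => by
    have hdvd : ∀ i, (n : ℤ) ∣ v i := fun i =>
      (ZMod.intCast_zmod_eq_zero_iff_dvd _ _).mp (congrFun hv i)
    have : v = (n : ℤ) • fun i => v i / n := by
      ext i; simp [Int.mul_ediv_cancel' (hdvd i)]
    exact this ▸ hL _
  have hsurj : Function.Surjective red := fun x =>
    ⟨fun i => (x i).cast, funext fun i => ZMod.intCast_zmod_cast (x i)⟩
  have hindex : L.index = (L.map red).index := by
    rw [← AddSubgroup.index_comap_of_surjective _ hsurj, AddSubgroup.comap_map_eq_self hker]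
  rw [Nat.card_congr (boxEquivMapIntCast L hL), hindex, AddSubgroup.card_mul_index,
    Nat.card_fun, Nat.card_zmod, Nat.card_eq_fintype_card]

end BoxCount

lemma mul_abs_add_le_abs_mul_add {n c q d : ℤ} (hc : 0 ≤ c) (hq : n * c ≤ q) (hd : |d| < n)
    (k : ℤ) : c * |d + n * k| ≤ |c * d + q * k| := by
  obtain ⟨hd₁, hd₂⟩ := abs_lt.mp hd
  have hsplit : c * d + q * k = c * (d + n * k) + (q - n * c) * k := by ring
  rcases lt_trichotomy k 0 with hk | rfl | hk
  · have hdk : d + n * k < 0 := by nlinarith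
    have hrest : (q - n * c) * k ≤ 0 := mul_nonpos_of_nonneg_of_nonpos (by linarith) hk.le
    have hcd : c * (d + n * k) ≤ 0 := mul_nonpos_of_nonneg_of_nonpos hc hdk.le
    rw [abs_of_neg hdk, abs_of_nonpos (by linarith)]
    linarith
  · simp [abs_mul, abs_of_nonneg hc]
  · have hdk : 0 < d + n * k := by nlinarith
    have hrest : 0 ≤ (q - n * c) * k := mul_nonneg (by linarith) hk.le
    have hcd : 0 ≤ c * (d + n * k) := mul_nonneg hc hdk.le
    rw [abs_of_pos hdk, abs_of_nonneg (by linarith)]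
    linarith

lemma sq_le_sq_of_dvd {m a : ℤ} (h : m ∣ a) (ha : a ≠ 0) : m ^ 2 ≤ a ^ 2 := by
  rw [sq_le_sq, Int.abs_eq_natAbs, Int.abs_eq_natAbs]
  exact_mod_cast Int.natAbs_le_of_dvd_ne_zero h ha

lemma two_mul_sqrt_two_mul_sq (c : ℝ) : (2 * √2 * c) ^ 2 = 8 * c ^ 2 := by
  rw [mul_pow, mul_pow, Real.sq_sqrt zero_le_two]
  ring

lemma two_mul_sqrt_two_mul_le_sqrt {c s : ℝ} (hc : 0 ≤ c) (h : 8 * c ^ 2 ≤ s) :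
    2 * √2 * c ≤ √s :=
  (Real.le_sqrt (by positivity) (by nlinarith [sq_nonneg c])).mpr
    ((two_mul_sqrt_two_mul_sq c).trans_le h)

lemma torusDist_le_eucDist (p : ℕ) {ℓ : ℕ} (v₁ v₂ : Fin ℓ → ℤ) :
    torusDist p v₁ v₂ ≤ eucDist v₁ v₂ :=
  csInf_le ⟨0, by rintro _ ⟨k, rfl⟩; positivity⟩ ⟨0, by simp [eucDist]⟩

lemma smul_four_mem_twoE8 (v : Fin 8 → ℤ) : (4 : ℤ) • v ∈ twoE8 :=
  ⟨Or.inl fun i => ⟨2 * v i, by simp only [Pi.smul_apply, smul_eq_mul]; ring⟩,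
    by simp [← Finset.mul_sum]⟩

def twoE8Syndrome : (Fin 8 → ℤ) →+ ZMod 4 × (Fin 6 → ZMod 2) where
  toFun x := (((∑ i, x i : ℤ) : ZMod 4), fun j => ((x j.castSucc.succ - x 0 : ℤ) : ZMod 2))
  map_zero' := by ext <;> simp
  map_add' x y := by
    ext j
    · simp [Finset.sum_add_distrib]
    · simp only [Pi.add_apply, Prod.snd_add]
      push_cast
      ring

lemma ker_twoE8Syndrome : twoE8Syndrome.ker = twoE8 := by
  ext x
  simp only [AddMonoidHom.mem_ker, twoE8Syndrome, AddMonoidHom.coe_mk, ZeroHom.coe_mk,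
    Prod.mk_eq_zero, funext_iff, Pi.zero_apply, ZMod.intCast_zmod_eq_zero_iff_dvd]
  constructor
  · rintro ⟨hsum, hdiff⟩
    have hpar : ∀ i, 2 ∣ x i - x 0 := by
      simp only [Fin.forall_fin_succ, IsEmpty.forall_iff, and_true] at hdiff
      rw [Fin.sum_univ_eight] at hsum
      intro i
      fin_cases i <;> simp at hdiff ⊢ <;> omega
    refine ⟨?_, hsum⟩
    by_cases h0 : Even (x 0)
    · exact Or.inl fun i => by simpa using (even_iff_two_dvd.mpr (hpar i)).add h0
    · exact Or.inr fun i => by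
        simpa using (even_iff_two_dvd.mpr (hpar i)).add_odd (Int.not_even_iff_odd.mp h0)
  · rintro ⟨hp | hp, hsum⟩
    · exact ⟨hsum, fun j => even_iff_two_dvd.mp ((hp _).sub (hp _))⟩
    · exact ⟨hsum, fun j => even_iff_two_dvd.mp ((hp _).sub_odd (hp _))⟩

lemma twoE8Syndrome_surjective : Function.Surjective twoE8Syndrome := by
  rintro ⟨s, a⟩
  refine ⟨Fin.cons 0 (Fin.snoc (fun j => (a j).cast) (s.cast - ∑ j, (a j).cast)), ?_⟩
  simp only [twoE8Syndrome, AddMonoidHom.coe_mk, ZeroHom.coe_mk, Fin.sum_univ_succ (n := 7),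
    Fin.sum_univ_castSucc (n := 6), Fin.cons_zero, Fin.cons_succ, Fin.snoc_castSucc,
    Fin.snoc_last]
  simp

lemma index_twoE8 : twoE8.index = 2 ^ 8 := by
  rw [← ker_twoE8Syndrome, AddSubgroup.index_ker, AddMonoidHom.range_eq_top.mpr
    twoE8Syndrome_surjective]
  simp

lemma eight_le_sum_sq_of_mem_twoE8 {d : Fin 8 → ℤ} (hd : d ∈ twoE8) (hd0 : d ≠ 0) :
    8 ≤ ∑ i, d i ^ 2 := by
  obtain ⟨hpar | hpar, hsum⟩ := hd
  · obtain ⟨i, hi⟩ := Function.ne_iff.mp hd0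
    by_cases hsupp : ∃ j, j ≠ i ∧ d j ≠ 0
    · obtain ⟨j, hji, hj⟩ := hsupp
      have h₂ : ∀ l, d l ≠ 0 → 4 ≤ d l ^ 2 := fun l hl =>
        sq_le_sq_of_dvd (m := 2) (even_iff_two_dvd.mp (hpar l)) hl
      calc (8 : ℤ) = 4 + 4 := by norm_num
        _ ≤ d i ^ 2 + d j ^ 2 := add_le_add (h₂ i hi) (h₂ j hj)
        _ ≤ ∑ l, d l ^ 2 := Finset.add_le_sum (fun _ _ => sq_nonneg _) (mem_univ _)
            (mem_univ _) hji.symm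
    · push Not at hsupp
      rw [Finset.sum_eq_single i (fun j _ hj => hsupp j hj) (by simp)] at hsum
      calc (8 : ℤ) ≤ 4 ^ 2 := by norm_num
        _ ≤ d i ^ 2 := sq_le_sq_of_dvd hsum hi
        _ ≤ ∑ l, d l ^ 2 := Finset.single_le_sum (fun _ _ => sq_nonneg _) (mem_univ i)
  · have h₁ : ∀ l ∈ univ, 1 ≤ d l ^ 2 := fun l _ =>
      sq_le_sq_of_dvd (one_dvd _) fun h => by simpa [h] using hpar l
    simpa using Finset.card_nsmul_le_sum univ _ _ h₁

lemma eight_mul_sq_le_sum_sq {c q : ℤ} (hc : 0 ≤ c) (hq : 4 * c ≤ q) {d : Fin 8 → ℤ}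
    (hd : d ∈ twoE8) (hd0 : d ≠ 0) (hbd : ∀ i, |d i| < 4) (k : Fin 8 → ℤ) :
    8 * c ^ 2 ≤ ∑ i, (c * d i + q * k i) ^ 2 := by
  have hmem : d + (4 : ℤ) • k ∈ twoE8 := add_mem hd (smul_four_mem_twoE8 k)
  have hne : d + (4 : ℤ) • k ≠ 0 := by
    obtain ⟨i, hi⟩ := Function.ne_iff.mp hd0
    have := abs_lt.mp (hbd i)
    refine Function.ne_iff.mpr ⟨i, ?_⟩
    simp only [Pi.zero_apply] at hi
    simp only [Pi.add_apply, Pi.smul_apply, smul_eq_mul, Pi.zero_apply]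
    omega
  calc 8 * c ^ 2 ≤ c ^ 2 * ∑ i, (d + (4 : ℤ) • k) i ^ 2 := by
        nlinarith [eight_le_sum_sq_of_mem_twoE8 hmem hne, sq_nonneg c]
    _ = ∑ i, (c * |d i + 4 * k i|) ^ 2 := by
        simp [Finset.mul_sum, mul_pow, sq_abs]
    _ ≤ ∑ i, (c * d i + q * k i) ^ 2 := Finset.sum_le_sum fun i _ => by
        rw [← sq_abs (c * d i + q * k i)]
        exact pow_le_pow_left₀ (by positivity) (mul_abs_add_le_abs_mul_add hc hq (hbd i) (k i)) 2

lemma two_mul_sqrt_two_le_eucDist {v₁ v₂ : Fin 8 → ℤ} (h₁ : v₁ ∈ twoE8) (h₂ : v₂ ∈ twoE8)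
    (hne : v₁ ≠ v₂) : 2 * √2 ≤ eucDist v₁ v₂ := by
  have := eight_le_sum_sq_of_mem_twoE8 (sub_mem h₁ h₂) (sub_ne_zero.mpr hne)
  simpa [eucDist] using two_mul_sqrt_two_mul_le_sqrt (c := 1)
    (s := ∑ i, ((v₁ i - v₂ i : ℤ) : ℝ) ^ 2) zero_le_one (by exact_mod_cast this)

lemma two_mul_sqrt_two_mul_le_torusDist {c q : ℕ} (hcq : 4 * c ≤ q) {v₁ v₂ : Fin 8 → ℤ}
    (h₁ : v₁ ∈ twoE8) (h₂ : v₂ ∈ twoE8) (hne : v₁ ≠ v₂) (hbd : ∀ i, |v₁ i - v₂ i| < 4) :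
    2 * √2 * c ≤ torusDist q (fun i => (c : ℤ) * v₁ i) (fun i => (c : ℤ) * v₂ i) := by
  refine le_csInf ⟨_, 0, rfl⟩ ?_
  rintro _ ⟨k, rfl⟩
  refine two_mul_sqrt_two_mul_le_sqrt (Nat.cast_nonneg c) ?_
  have := eight_mul_sq_le_sum_sq (c := c) (q := q) (Nat.cast_nonneg c) (by exact_mod_cast hcq)
    (sub_mem h₁ h₂) (sub_ne_zero.mpr hne) hbd k
  simp only [Pi.sub_apply, mul_sub] at this
  exact_mod_cast this

def twoE8ShortVec : Fin 8 → ℤ := ![2, 2, 0, 0, 0, 0, 0, 0]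

lemma twoE8ShortVec_mem : twoE8ShortVec ∈ twoE8 :=
  ⟨Or.inl (by decide), by decide⟩

lemma twoE8ShortVec_mem_Ico (i : Fin 8) : twoE8ShortVec i ∈ Set.Ico (0 : ℤ) 4 := by
  fin_cases i <;> simp [twoE8ShortVec]

lemma twoE8ShortVec_ne_zero : twoE8ShortVec ≠ 0 :=
  Function.ne_iff.mpr ⟨0, by simp [twoE8ShortVec]⟩

lemma eucDist_smul_twoE8ShortVec (c : ℕ) :
    eucDist (fun i => (c : ℤ) * twoE8ShortVec i) (fun i => (c : ℤ) * (0 : Fin 8 → ℤ) i) =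
      2 * √2 * c := by
  rw [eucDist, ← Real.sqrt_sq (by positivity : 0 ≤ 2 * √2 * (c : ℝ)), two_mul_sqrt_two_mul_sq]
  congr 1
  simp [twoE8ShortVec, Fin.sum_univ_eight]
  ring

lemma torusDist_smul_twoE8ShortVec {c q : ℕ} (hcq : 4 * c ≤ q) :
    torusDist q (fun i => (c : ℤ) * twoE8ShortVec i) (fun i => (c : ℤ) * (0 : Fin 8 → ℤ) i) =
      2 * √2 * c :=
  le_antisymm ((torusDist_le_eucDist _ _ _).trans_eq (eucDist_smul_twoE8ShortVec c))
    (two_mul_sqrt_two_mul_le_torusDist hcq twoE8ShortVec_mem (zero_mem _)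
      twoE8ShortVec_ne_zero fun i => by fin_cases i <;> simp [twoE8ShortVec])

lemma isLeast_eucDist_twoE8 :
    IsLeast {r : ℝ | ∃ v₁ ∈ twoE8, ∃ v₂ ∈ twoE8, v₁ ≠ v₂ ∧ r = eucDist v₁ v₂} (2 * √2) := by
  refine ⟨⟨twoE8ShortVec, twoE8ShortVec_mem, 0, zero_mem _, twoE8ShortVec_ne_zero, ?_⟩, ?_⟩
  · have := eucDist_smul_twoE8ShortVec 1
    simp only [Nat.cast_one, one_mul, mul_one] at this
    exact this.symm
  · rintro _ ⟨v₁, h₁, v₂, h₂, hne, rfl⟩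
    exact two_mul_sqrt_two_le_eucDist h₁ h₂ hne

lemma isLeast_torusDist_smul_twoE8 (q : ℕ) :
    IsLeast
      {r : ℝ | ∃ v₁, v₁ ∈ twoE8 ∧ (∀ i, v₁ i ∈ Set.Ico (0 : ℤ) 4) ∧
        ∃ v₂, v₂ ∈ twoE8 ∧ (∀ i, v₂ i ∈ Set.Ico (0 : ℤ) 4) ∧
        v₁ ≠ v₂ ∧
        r = torusDist q (fun i => ((q / 4 : ℕ) : ℤ) * v₁ i)
              (fun i => ((q / 4 : ℕ) : ℤ) * v₂ i)}
      (2 * √2 * ((q / 4 : ℕ) : ℝ)) := by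
  have hcq : 4 * (q / 4) ≤ q := Nat.mul_div_le q 4
  refine ⟨⟨twoE8ShortVec, twoE8ShortVec_mem, twoE8ShortVec_mem_Ico, 0, zero_mem _, by simp,
    twoE8ShortVec_ne_zero, (torusDist_smul_twoE8ShortVec hcq).symm⟩, ?_⟩
  rintro _ ⟨v₁, h₁, hb₁, v₂, h₂, hb₂, hne, rfl⟩
  refine two_mul_sqrt_two_mul_le_torusDist hcq h₁ h₂ hne fun i => ?_
  obtain ⟨hv₁, hv₁'⟩ := hb₁ i
  obtain ⟨hv₂, hv₂'⟩ := hb₂ i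
  rw [abs_lt]
  omega

theorem stmt19_general (q : ℕ) :
    twoE8.index = 2 ^ 8 ∧
    IsLeast {r : ℝ | ∃ v₁ ∈ twoE8, ∃ v₂ ∈ twoE8, v₁ ≠ v₂ ∧ r = eucDist v₁ v₂}
      (2 * Real.sqrt 2) ∧
    (∀ v : Fin 8 → ℤ, (4 : ℤ) • v ∈ twoE8) ∧
    Nat.card {v : Fin 8 → ℤ // v ∈ twoE8 ∧ ∀ i, v i ∈ Set.Ico (0 : ℤ) 4} = 256 ∧
    IsLeast
      {r : ℝ | ∃ v₁, v₁ ∈ twoE8 ∧ (∀ i, v₁ i ∈ Set.Ico (0 : ℤ) 4) ∧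
        ∃ v₂, v₂ ∈ twoE8 ∧ (∀ i, v₂ i ∈ Set.Ico (0 : ℤ) 4) ∧
        v₁ ≠ v₂ ∧ r = torusDist 4 v₁ v₂}
      (2 * Real.sqrt 2) ∧
    IsLeast
      {r : ℝ | ∃ v₁, v₁ ∈ twoE8 ∧ (∀ i, v₁ i ∈ Set.Ico (0 : ℤ) 4) ∧
        ∃ v₂, v₂ ∈ twoE8 ∧ (∀ i, v₂ i ∈ Set.Ico (0 : ℤ) 4) ∧
        v₁ ≠ v₂ ∧
        r = torusDist q (fun i => ((q / 4 : ℕ) : ℤ) * v₁ i)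
              (fun i => ((q / 4 : ℕ) : ℤ) * v₂ i)}
      (2 * Real.sqrt 2 * ((q / 4 : ℕ) : ℝ)) := by
  have hcard : Nat.card {v : Fin 8 → ℤ // v ∈ twoE8 ∧ ∀ i, v i ∈ Set.Ico (0 : ℤ) 4} * 2 ^ 8 =
      4 ^ 8 := index_twoE8 ▸ card_box_mul_index twoE8 smul_four_mem_twoE8
  refine ⟨index_twoE8, isLeast_eucDist_twoE8, smul_four_mem_twoE8, ?_, ?_,
    isLeast_torusDist_smul_twoE8 q⟩
  · exact Nat.eq_of_mul_eq_mul_right (by norm_num) (hcard.trans (by norm_num))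
  · simpa using isLeast_torusDist_smul_twoE8 4

/-- `2E₈` has determinant `2⁸`, minimum Euclidean distance `2√2`,
and contains `4ℤ⁸`; the code `C' = 2E₈ ∩ {0,1,2,3}⁸` has exactly `2⁸ = 256`
points and minimum toroidal distance (modulus 4) equal to `2√2`; and the scaled
code `⌊q/4⌋·C' ⊆ ℤ_q⁸` has minimum toroidal distance (modulus `q`) equal to
`2√2·⌊q/4⌋`. -/
theorem stmt19 (q : ℕ) (hq : 4 ≤ q) :
    twoE8.index = 2 ^ 8 ∧
    IsLeast {r : ℝ | ∃ v₁ ∈ twoE8, ∃ v₂ ∈ twoE8, v₁ ≠ v₂ ∧ r = eucDist v₁ v₂}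
      (2 * Real.sqrt 2) ∧
    (∀ v : Fin 8 → ℤ, (4 : ℤ) • v ∈ twoE8) ∧
    Nat.card {v : Fin 8 → ℤ // v ∈ twoE8 ∧ ∀ i, v i ∈ Set.Ico (0 : ℤ) 4} = 256 ∧
    IsLeast
      {r : ℝ | ∃ v₁, v₁ ∈ twoE8 ∧ (∀ i, v₁ i ∈ Set.Ico (0 : ℤ) 4) ∧
        ∃ v₂, v₂ ∈ twoE8 ∧ (∀ i, v₂ i ∈ Set.Ico (0 : ℤ) 4) ∧
        v₁ ≠ v₂ ∧ r = torusDist 4 v₁ v₂}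
      (2 * Real.sqrt 2) ∧
    IsLeast
      {r : ℝ | ∃ v₁, v₁ ∈ twoE8 ∧ (∀ i, v₁ i ∈ Set.Ico (0 : ℤ) 4) ∧
        ∃ v₂, v₂ ∈ twoE8 ∧ (∀ i, v₂ i ∈ Set.Ico (0 : ℤ) 4) ∧
        v₁ ≠ v₂ ∧
        r = torusDist q (fun i => ((q / 4 : ℕ) : ℤ) * v₁ i)
              (fun i => ((q / 4 : ℕ) : ℤ) * v₂ i)}
      (2 * Real.sqrt 2 * ((q / 4 : ℕ) : ℝ)) :=
  stmt19_general q
end
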